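/- arXiv:1103.5100 — 6 statements merged into one kernel-verified Lean document; each statement's English description precedes it below -/
import Mathlib

section
/- Let φ: R → S be as in the setup, and assume: (a) the quotient φ(π)S/φ(π)²S is a finite set; (b) the induced surjection φ₁: R/πR → S/φ(π)S is an isomorphism; and (c) R/πR is isomorphic as an O-algebra to O/ϖʳ for some positive integer r. Then φ: R → S is an isomorphism of O-algebras. -/
/-!
Since `S/φ(π)` is finite and `O` is infinite, `φ(π)S` contains a nonzero element of `O`; as `S` is
`O`-torsion-free, `φ(π)` is a non-zero-divisor, whence `|S/φ(π)ⁿ| = |S/φ(π)|ⁿ`. On the other side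
`|R/πⁿ| ≤ |R/π|ⁿ`, and `|R/π| = |S/φ(π)|` by (b). So each surjection `R/πⁿ → S/φ(π)ⁿ` of finite
sets is a bijection, i.e. `ker φ ⊆ ⋂ πⁿR`, and this intersection vanishes by Krull's intersection
theorem, `π` being a nonunit by (c).
-/

open IsLocalRing nonZeroDivisors

section QuotientCard

variable {A : Type*} [CommRing A]

/-- Multiplication by `b` gives `0 → A/(I : b) → A/I → A/(b) → 0`. -/
theorem Ideal.card_quotient_eq_card_quotient_colon_mul {I : Ideal A} {b : A}
    (hI : I ≤ Ideal.span {b}) :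
    Nat.card (A ⧸ I) = Nat.card (A ⧸ I.colon {b}) * Nat.card (A ⧸ Ideal.span {b}) := by
  let f : A →ₗ[A] A ⧸ I := I.mkQ ∘ₗ LinearMap.toSpanSingleton A A b
  have hker : LinearMap.ker f = I.colon {b} := by
    ext x
    simp only [f, LinearMap.mem_ker, LinearMap.comp_apply, LinearMap.toSpanSingleton_apply,
      Submodule.mkQ_apply, Submodule.Quotient.mk_eq_zero, Submodule.mem_colon_singleton]
  have hrange : LinearMap.range f = Submodule.map I.mkQ (Ideal.span {b}) := by
    rw [LinearMap.range_comp, ← LinearMap.span_singleton_eq_range]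
  rw [← Submodule.card_quotient_mul_card_quotient _ _ hI, ← hrange, ← hker,
    Nat.card_congr f.quotKerEquivRange.toEquiv]

theorem Ideal.card_quotient_span_singleton_pow_le (a : A) [Finite (A ⧸ Ideal.span {a})] (n : ℕ) :
    Nat.card (A ⧸ Ideal.span {a ^ n}) ≤ Nat.card (A ⧸ Ideal.span {a}) ^ n := by
  have h := Ideal.index_pow_le {a} (I := Ideal.span {a}) (by simp) n
  simp only [Ideal.span_singleton_pow, Finset.card_singleton, one_pow, Finset.sum_const,
    Finset.card_range, smul_eq_mul, mul_one] at h
  exact h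

theorem Ideal.colon_span_singleton_pow_succ {a : A} (ha : a ∈ A⁰) (n : ℕ) :
    (Ideal.span {a ^ (n + 1)}).colon {a ^ n} = Ideal.span {a} := by
  ext x
  simp only [Submodule.mem_colon_singleton, smul_eq_mul, Ideal.mem_span_singleton']
  refine ⟨fun ⟨c, hc⟩ => ⟨c, ?_⟩, fun ⟨c, hc⟩ => ⟨c, by rw [← hc]; ring⟩⟩
  have : (c * a - x) * a ^ n = 0 := by rw [sub_mul, ← hc]; ring
  exact sub_eq_zero.mp ((mul_right_mem_nonZeroDivisors_eq_zero_iff (pow_mem ha n)).mp this)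

theorem Ideal.card_quotient_span_singleton_pow {a : A} (ha : a ∈ A⁰) (n : ℕ) :
    Nat.card (A ⧸ Ideal.span {a ^ n}) = Nat.card (A ⧸ Ideal.span {a}) ^ n := by
  induction n with
  | zero => simp
  | succ n ih =>
    have hle : Ideal.span {a ^ (n + 1)} ≤ Ideal.span {a ^ n} :=
      Ideal.span_singleton_le_span_singleton.mpr (pow_dvd_pow a n.le_succ)
    rw [Ideal.card_quotient_eq_card_quotient_colon_mul hle,
      Ideal.colon_span_singleton_pow_succ ha, ih, pow_succ']

end QuotientCard

instance IsDiscreteValuationRing.infinite {O : Type*} [CommRing O] [IsDomain O]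
    [IsDiscreteValuationRing O] : Infinite O :=
  not_finite_iff_infinite.mp fun _ => not_isField O (Finite.isField_of_domain O)

theorem mem_nonZeroDivisors_of_finite_quotient_span {O S : Type*} [CommRing O] [IsDomain O]
    [Infinite O] [CommRing S] [Algebra O S] [Module.IsTorsionFree O S] (a : S)
    [Finite (S ⧸ Ideal.span {a})] : a ∈ S⁰ := by
  obtain ⟨x, y, hxy, hmk⟩ := Finite.exists_ne_map_eq_of_infinite
    fun t : O => Ideal.Quotient.mk (Ideal.span {a}) (algebraMap O S t)
  obtain ⟨s, hs⟩ : ∃ s, s * a = algebraMap O S (x - y) := by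
    rw [← Ideal.mem_span_singleton', map_sub]
    exact Ideal.Quotient.eq.mp hmk
  have hreg : IsSMulRegular S (x - y) :=
    Module.IsTorsionFree.isSMulRegular (IsRegular.of_ne_zero (sub_ne_zero.mpr hxy))
  refine mem_nonZeroDivisors_iff_left.mpr fun z hz => hreg.right_eq_zero_of_smul ?_
  rw [Algebra.smul_def, ← hs, mul_assoc, hz, mul_zero]

theorem injective_of_card_quotient_span_le {R S : Type*} [CommRing R] [CommRing S]
    (φ : R →+* S) (hφ : Function.Surjective φ) (π : R) [IsHausdorff (Ideal.span {π}) R]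
    [Finite (R ⧸ Ideal.span {π})] (hπ : φ π ∈ S⁰)
    (hcard : Nat.card (R ⧸ Ideal.span {π}) ≤ Nat.card (S ⧸ Ideal.span {φ π})) :
    Function.Injective φ := by
  refine (injective_iff_map_eq_zero φ).mpr fun x hx =>
    IsHausdorff.haus' (I := Ideal.span {π}) x fun n => ?_
  have hle : Ideal.span {π ^ n} ≤ (Ideal.span {φ π ^ n}).comap φ := by
    rw [Ideal.span_singleton_le_iff_mem, Ideal.mem_comap, map_pow]
    exact Ideal.mem_span_singleton_self _
  have : Finite (R ⧸ Ideal.span {π ^ n}) := by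
    rw [← Ideal.span_singleton_pow]
    exact Ideal.finite_quotient_pow (Submodule.fg_span_singleton π) n
  have hbij : Function.Bijective (Ideal.quotientMap _ φ hle) := by
    refine (Ideal.quotientMap_surjective hφ).bijective_of_nat_card_le ?_
    calc Nat.card (R ⧸ Ideal.span {π ^ n}) ≤ Nat.card (R ⧸ Ideal.span {π}) ^ n :=
          Ideal.card_quotient_span_singleton_pow_le π n
      _ ≤ Nat.card (S ⧸ Ideal.span {φ π}) ^ n := Nat.pow_le_pow_left hcard n
      _ = Nat.card (S ⧸ Ideal.span {φ π ^ n}) :=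
          (Ideal.card_quotient_span_singleton_pow hπ n).symm
  have hxn : x ∈ Ideal.span {π ^ n} := by
    rw [← Ideal.Quotient.eq_zero_iff_mem]
    refine hbij.injective ?_
    rw [Ideal.quotientMap_mk, hx, map_zero, map_zero]
  rwa [SModEq.zero, smul_eq_mul, Ideal.mul_top, Ideal.span_singleton_pow]

/-- Theorem `cri1`, first case, of Berger–Klosin:
`O` is a complete discrete valuation ring with uniformizer `ϖ` and finite residue field;
`R` and `S` are complete local Noetherian `O`-algebras with residue field `F` (that of `O`),
`S` is finite free as an `O`-module, `φ : R → S` is a surjective `O`-algebra map and `π ∈ R`.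
If `φ(π)S/φ(π)²S` is finite, the induced map `φ₁ : R/πR → S/φ(π)S` is an isomorphism and
`R/πR ≅ O/ϖʳ` for some positive integer `r`, then `φ` is an isomorphism. -/
theorem deformation_criterion_torsion_case
    {O : Type*} [CommRing O] [IsDomain O] [IsDiscreteValuationRing O]
    [Finite (ResidueField O)]
    (ϖ : O) (hϖ : Irreducible ϖ)
    {R S : Type*} [CommRing R] [CommRing S] [IsLocalRing R] [IsNoetherianRing R]
    [Algebra O R] [Algebra O S]
    -- `S` is a finitely generated free `O`-module
    [Module.Free O S]
    (φ : R →ₐ[O] S) (hφ : Function.Surjective φ) (π : R)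
    -- (b) the induced surjection `φ₁ : R/πR → S/φ(π)S` is an isomorphism
    (hbij : Function.Bijective
      (Ideal.quotientMap (Ideal.span {φ π}) (φ : R →+* S)
        (show Ideal.span {π} ≤ (Ideal.span {φ π}).comap (φ : R →+* S) by
          rw [Ideal.span_le, Set.singleton_subset_iff]
          exact Ideal.subset_span rfl)))
    -- (c) `R/πR ≅ O/ϖʳ` as `O`-algebras, for some positive integer `r`
    (r : ℕ) (hr : 0 < r)
    (hRmod : Nonempty ((R ⧸ (Ideal.span {π} : Ideal R)) ≃ₐ[O] (O ⧸ (Ideal.span {ϖ ^ r} : Ideal O)))) :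
    Function.Bijective φ := by
  obtain ⟨e⟩ := hRmod
  have : Finite (O ⧸ Ideal.span {ϖ}) := Finite.of_equiv (ResidueField O)
    (Ideal.quotEquivOfEq ((IsDiscreteValuationRing.irreducible_iff_uniformizer ϖ).mp hϖ)).toEquiv
  have : Finite (O ⧸ Ideal.span {ϖ ^ r}) := by
    rw [← Ideal.span_singleton_pow]
    exact Ideal.finite_quotient_pow (Submodule.fg_span_singleton ϖ) r
  have : Nontrivial (O ⧸ Ideal.span {ϖ ^ r}) :=
    Ideal.Quotient.nontrivial_iff.mpr <|
      Ideal.span_singleton_ne_top (hϖ.not_isUnit ∘ (isUnit_pow_iff hr.ne').mp)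
  have : Finite (R ⧸ Ideal.span {π}) := .of_equiv _ e.symm.toEquiv
  have : Nontrivial (R ⧸ Ideal.span {π}) := e.toEquiv.nontrivial
  have : IsHausdorff (Ideal.span {π}) R :=
    .of_isLocalRing _ _ (Ideal.Quotient.nontrivial_iff.mp inferInstance)
  have : Finite (S ⧸ Ideal.span {φ π}) := .of_surjective _ hbij.surjective
  have hcard := (Nat.card_congr (Equiv.ofBijective _ hbij)).le
  exact ⟨injective_of_card_quotient_span_le (φ : R →+* S) hφ π
    (mem_nonZeroDivisors_of_finite_quotient_span (O := O) (φ π)) hcard, hφ⟩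
end

section
/- Suppose given surjective O-algebra homomorphisms π_R: R → O and π_S: S → O with π_S ∘ φ = π_R. Set Φ_R = (ker π_R)/(ker π_R)² and η_S = π_S(Ann_S(ker π_S)) ⊆ O, where Ann_S(ker π_S) is the annihilator ideal of ker π_S in S. Assume that ker π_R is a principal ideal of R, that η_S ≠ 0 (so that O/η_S is finite), and that the cardinality of Φ_R is at most the cardinality of O/η_S. Then φ: R → S is an isomorphism of O-algebras. -/
/-!
Write `I = ker π_R = (r)`, so that `J = ker π_S = φ(I) = (φ r)`. Multiplication by `φ r` maps `S`
onto `J/J²` with kernel inside `J + Ann J`, hence `#(O/η_S) ≤ #(J/J²) ≤ #(I/I²) ≤ #(O/η_S)`: the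
surjection `I/I² → J/J²` is a bijection and `ker φ ⊆ I²`. As `S` is `O`-torsion-free and
`η_S ≠ 0`, no nonzero element of `J` annihilates `J`. Now `x = b r² ∈ ker φ` gives
`φ(b r) ∈ J ∩ Ann J`, so `b r ∈ ker φ`; thus `ker φ = I · ker φ` and Nakayama gives `ker φ = 0`.
-/

open Function Ideal IsLocalRing

theorem AddMonoidHom.card_le_card_of_ker_le {A B C : Type*} [AddCommGroup A] [AddGroup B]
    [AddGroup C] [Finite B] {f : A →+ B} {g : A →+ C} (hf : Surjective f) (hg : Surjective g)
    (h : f.ker ≤ g.ker) : Nat.card C ≤ Nat.card B := by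
  let e := QuotientAddGroup.quotientKerEquivOfSurjective f hf
  have : Finite (A ⧸ f.ker) := Finite.of_equiv _ e.toEquiv.symm
  calc Nat.card C ≤ Nat.card (A ⧸ f.ker) :=
        Nat.card_le_card_of_surjective (QuotientAddGroup.lift f.ker g h)
          (QuotientAddGroup.lift_surjective_of_surjective _ _ hg _)
    _ = Nat.card B := Nat.card_congr e.toEquiv

namespace Ideal

theorem card_cotangent_eq_card_map_mkQ {R : Type*} [CommRing R] (I : Ideal R) :
    Nat.card I.Cotangent = Nat.card (Submodule.map (I ^ 2).mkQ I) :=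
  Nat.card_congr <| I.cotangentEquivIdeal.toEquiv.trans (Equiv.subtypeEquivRight fun _ ↦ Iff.rfl)

section mapCotangent

variable {R A B : Type*} [CommRing R] [CommRing A] [CommRing B] [Algebra R A] [Algebra R B]
  {I₁ : Ideal A} {I₂ : Ideal B} {f : A →ₐ[R] B} (h : I₁ ≤ I₂.comap f)

theorem mapCotangent_surjective (hf : Surjective f) (h₂ : I₂ ≤ I₁.map f) :
    Surjective (mapCotangent I₁ I₂ f h) := by
  intro y
  obtain ⟨⟨y, hy⟩, rfl⟩ := I₂.toCotangent_surjective y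
  obtain ⟨x, hx, rfl⟩ := (mem_map_iff_of_surjective f hf).mp (h₂ hy)
  exact ⟨I₁.toCotangent ⟨x, hx⟩, rfl⟩

theorem ker_le_sq_of_mapCotangent_injective (hinj : Injective (mapCotangent I₁ I₂ f h))
    (hker : RingHom.ker f ≤ I₁) : RingHom.ker f ≤ I₁ ^ 2 := by
  intro x hx
  rw [← I₁.toCotangent_eq_zero ⟨x, hker hx⟩]
  apply hinj
  rw [mapCotangent_toCotangent, map_zero, toCotangent_eq_zero]
  simp [RingHom.mem_ker.mp hx]

end mapCotangent

variable {S O F : Type*} [CommRing S] [CommRing O] [FunLike F S O] [RingHomClass F S O]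

theorem card_quotient_map_annihilator_le_card_cotangent {π : F} (hπ : Surjective π) {s : S}
    (hs : RingHom.ker π = span {s}) [Finite (RingHom.ker π).Cotangent] :
    Nat.card (O ⧸ (Submodule.annihilator (RingHom.ker π)).map π) ≤
      Nat.card (RingHom.ker π).Cotangent := by
  set J := RingHom.ker π
  have hsJ : s ∈ J := hs ▸ mem_span_singleton_self s
  let f : S →ₗ[S] J.Cotangent := LinearMap.toSpanSingleton S _ (J.toCotangent ⟨s, hsJ⟩)
  let g : S →+* O ⧸ (Submodule.annihilator J).map π := (Quotient.mk _).comp π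
  refine AddMonoidHom.card_le_card_of_ker_le (f := f.toAddMonoidHom) (g := g.toAddMonoidHom)
    ?_ (Quotient.mk_surjective.comp hπ) ?_
  · intro y
    obtain ⟨⟨y, hy⟩, rfl⟩ := J.toCotangent_surjective y
    obtain ⟨u, rfl⟩ := mem_span_singleton'.mp (hs ▸ hy)
    exact ⟨u, by simp [f, ← map_smul]⟩
  · intro u hu
    have hu : u * s ∈ J ^ 2 := by
      rw [← J.toCotangent_eq_zero ⟨u * s, J.mul_mem_left u hsJ⟩]
      simpa [f, ← map_smul] using hu
    obtain ⟨v, hv⟩ := mem_span_singleton'.mp (span_singleton_pow s 2 ▸ hs ▸ hu)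
    have hann : u - v * s ∈ Submodule.annihilator J := by
      rw [hs, Submodule.mem_annihilator_span_singleton, smul_eq_mul]
      linear_combination -hv
    have hπs : π s = 0 := hsJ
    have : π u = π (u - v * s) := by rw [map_sub, map_mul, hπs, mul_zero, sub_zero]
    show Quotient.mk _ (π u) = 0
    rw [Quotient.eq_zero_iff_mem, this]
    exact mem_map_of_mem π hann

end Ideal

theorem AlgHom.ker_inf_annihilator_ker_eq_bot {O S : Type*} [CommRing O] [IsDomain O]
    [CommRing S] [Algebra O S] [Module.IsTorsionFree O S] (π : S →ₐ[O] O)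
    (hη : (Submodule.annihilator (RingHom.ker π)).map π ≠ ⊥) :
    RingHom.ker π ⊓ Submodule.annihilator (RingHom.ker π) = ⊥ := by
  obtain ⟨t₀, ht₀, hc⟩ := SetLike.not_le_iff_exists.mp (mt (map_eq_bot_iff_le_ker π).mpr hη)
  refine eq_bot_iff.mpr fun t ⟨htJ, htA⟩ ↦ ?_
  have hdiff : t₀ - algebraMap O S (π t₀) ∈ RingHom.ker π := by simp [RingHom.mem_ker]
  have h₁ : t * (t₀ - algebraMap O S (π t₀)) = 0 := Submodule.mem_annihilator.mp htA _ hdiff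
  have h₂ : t₀ * t = 0 := Submodule.mem_annihilator.mp ht₀ _ htJ
  have : π t₀ • t = 0 := by
    rw [Algebra.smul_def]; linear_combination h₂ - h₁
  exact (smul_eq_zero_iff_right hc).mp this

theorem RingHom.ker_le_span_smul_ker {R S F : Type*} [CommRing R] [CommRing S] [FunLike F R S]
    [RingHomClass F R S] (φ : F) {r : R} (hsq : ker φ ≤ span {r} ^ 2)
    (hdisj : span {φ r} ⊓ Submodule.annihilator (span {φ r}) = ⊥) :
    ker φ ≤ span {r} • ker φ := by
  intro x hx
  obtain ⟨b, rfl⟩ := mem_span_singleton'.mp (span_singleton_pow r 2 ▸ hsq hx)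
  have hbr : φ (b * r) = 0 := by
    rw [← Submodule.mem_bot (R := S), ← hdisj]
    refine ⟨mem_span_singleton'.mpr ⟨φ b, (map_mul φ b r).symm⟩,
      (Submodule.mem_annihilator_span_singleton _ _).mpr ?_⟩
    rw [smul_eq_mul, ← map_mul]
    simpa [pow_two, mul_assoc] using hx
  rw [show b * r ^ 2 = r * (b * r) by ring]
  exact Submodule.smul_mem_smul (mem_span_singleton_self r) hbr

theorem RingHom.injective_of_ker_le_smul_ker {R S F : Type*} [CommRing R] [IsLocalRing R]
    [IsNoetherianRing R] [CommRing S] [FunLike F R S] [RingHomClass F R S] (φ : F) {I : Ideal R}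
    (hI : I ≠ ⊤) (h : ker φ ≤ I • ker φ) : Injective φ := by
  rw [injective_iff_ker_eq_bot]
  refine Submodule.eq_bot_of_le_smul_of_le_jacobson_bot I _ (IsNoetherian.noetherian _) h ?_
  rw [jacobson_eq_maximalIdeal ⊥ bot_ne_top]
  exact le_maximalIdeal hI

theorem wiles_lenstra_variant_general
    {O : Type*} [CommRing O] [IsDomain O]
    {R S : Type*} [CommRing R] [CommRing S] [IsLocalRing R]
    [IsNoetherianRing R]
    [Algebra O R] [Algebra O S]
    [Module.Free O S]
    (φ : R →ₐ[O] S) (hφ : Function.Surjective φ)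
    (πR : R →ₐ[O] O)
    (πS : S →ₐ[O] O)
    (hcomp : πS.comp φ = πR)
    -- `ker π_R` is a principal ideal of `R`
    (hprin : (RingHom.ker πR).IsPrincipal)
    -- `η_S = π_S(Ann_S(ker π_S)) ≠ 0`
    (hη : Ideal.map πS (Submodule.annihilator (RingHom.ker πS : Ideal S)) ≠ ⊥)
    -- `Φ_R = (ker π_R)/(ker π_R)²` is finite of cardinality at most `#(O/η_S)`
    (hΦfin : Finite (Submodule.map ((RingHom.ker πR ^ 2 : Ideal R)).mkQ (RingHom.ker πR)))
    (hcard : Nat.card (Submodule.map ((RingHom.ker πR ^ 2 : Ideal R)).mkQ (RingHom.ker πR)) ≤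
      Nat.card (O ⧸ Ideal.map πS (Submodule.annihilator (RingHom.ker πS : Ideal S)))) :
    Function.Bijective φ := by
  obtain ⟨r, hr⟩ := hprin
  rw [submodule_span_eq] at hr
  have hIJ : RingHom.ker πR = (RingHom.ker πS).comap φ := by rw [← hcomp]; rfl
  set I := RingHom.ker πR
  set J := RingHom.ker πS
  have hJI : J = I.map φ := by rw [hIJ, map_comap_of_surjective φ hφ]
  have hJ : J = span {φ r} := by rw [hJI, hr, map_span, Set.image_singleton]
  have hπS : Surjective πS := fun c ↦ ⟨algebraMap O S c, πS.commutes c⟩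
  set ψ := mapCotangent I J φ hIJ.le
  have hψ : Surjective ψ := mapCotangent_surjective hIJ.le hφ hJI.le
  have : Finite I.Cotangent := Nat.finite_of_card_ne_zero (by
    rw [card_cotangent_eq_card_map_mkQ]; exact Nat.card_pos.ne')
  have : Finite J.Cotangent := .of_surjective ψ hψ
  have hψinj : Injective ψ := by
    refine ((Nat.bijective_iff_surjective_and_card ψ).mpr ⟨hψ, le_antisymm ?_
      (Nat.card_le_card_of_surjective ψ hψ)⟩).1
    calc Nat.card I.Cotangent ≤ Nat.card (O ⧸ (Submodule.annihilator J).map πS) := by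
          rw [card_cotangent_eq_card_map_mkQ]; exact hcard
      _ ≤ Nat.card J.Cotangent :=
          card_quotient_map_annihilator_le_card_cotangent hπS hJ
  have hsq : RingHom.ker φ ≤ span {r} ^ 2 :=
    hr ▸ ker_le_sq_of_mapCotangent_injective hIJ.le hψinj (hIJ ▸ comap_mono bot_le)
  refine ⟨RingHom.injective_of_ker_le_smul_ker φ (I := I) (RingHom.ker_ne_top πR) ?_, hφ⟩
  rw [hr]
  exact RingHom.ker_le_span_smul_ker φ hsq (hJ ▸ πS.ker_inf_annihilator_ker_eq_bot hη)

/-- Proposition `lenstraredone` of Berger–Klosin: with `O`, `R`, `S`, `φ`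
as in the setup, suppose given surjective `O`-algebra maps `π_R : R → O` and `π_S : S → O`
with `π_S ∘ φ = π_R`.  Set `Φ_R = (ker π_R)/(ker π_R)²` and `η_S = π_S(Ann_S (ker π_S))`.
If `ker π_R` is principal, `η_S ≠ 0`, and `#Φ_R ≤ #(O/η_S)`, then `φ` is an isomorphism. -/
theorem wiles_lenstra_variant
    {O : Type*} [CommRing O] [IsDomain O] [IsDiscreteValuationRing O]
    [IsAdicComplete (maximalIdeal O) O] [Finite (ResidueField O)]
    (ϖ : O) (hϖ : Irreducible ϖ)
    {R S : Type*} [CommRing R] [CommRing S] [IsLocalRing R] [IsLocalRing S]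
    [IsNoetherianRing R] [IsNoetherianRing S]
    [Algebra O R] [Algebra O S]
    [IsAdicComplete (maximalIdeal R) R] [IsAdicComplete (maximalIdeal S) S]
    -- the residue field of `R` is `F`, the residue field of `O`
    (hRsurj : Function.Surjective ((residue R).comp (algebraMap O R)))
    (hRker : RingHom.ker ((residue R).comp (algebraMap O R)) = maximalIdeal O)
    -- the residue field of `S` is `F`, the residue field of `O`
    (hSsurj : Function.Surjective ((residue S).comp (algebraMap O S)))
    (hSker : RingHom.ker ((residue S).comp (algebraMap O S)) = maximalIdeal O)
    -- `S` is a finitely generated free `O`-module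
    [Module.Finite O S] [Module.Free O S]
    (φ : R →ₐ[O] S) (hφ : Function.Surjective φ)
    (πR : R →ₐ[O] O) (hπR : Function.Surjective πR)
    (πS : S →ₐ[O] O) (hπS : Function.Surjective πS)
    (hcomp : πS.comp φ = πR)
    -- `ker π_R` is a principal ideal of `R`
    (hprin : (RingHom.ker πR).IsPrincipal)
    -- `η_S = π_S(Ann_S(ker π_S)) ≠ 0`
    (hη : Ideal.map πS (Submodule.annihilator (RingHom.ker πS : Ideal S)) ≠ ⊥)
    -- `Φ_R = (ker π_R)/(ker π_R)²` is finite of cardinality at most `#(O/η_S)`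
    (hΦfin : Finite (Submodule.map ((RingHom.ker πR ^ 2 : Ideal R)).mkQ (RingHom.ker πR)))
    (hcard : Nat.card (Submodule.map ((RingHom.ker πR ^ 2 : Ideal R)).mkQ (RingHom.ker πR)) ≤
      Nat.card (O ⧸ Ideal.map πS (Submodule.annihilator (RingHom.ker πS : Ideal S)))) :
    Function.Bijective φ :=
  wiles_lenstra_variant_general φ hφ πR πS hcomp hprin hη hΦfin hcard
end

section
/- Let f: G → M_{n₁×n₂}(F) be a function such that ρ_f: G → GL_n(F) is a group homomorphism, and assume ρ_f is non-semisimple in the sense that there is no matrix B ∈ M_{n₁×n₂}(F) with f(g) = ρ₁(g)·B − B·ρ₂(g) for all g ∈ G. Then ρ_f has scalar centralizer: every matrix M ∈ GL_n(F) satisfying M·ρ_f(g) = ρ_f(g)·M for all g ∈ G is a scalar multiple of the identity matrix. -/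
/-- The block upper-triangular map `ρ_f : g ↦ [[ρ₁ g, f g], [0, ρ₂ g]]`. -/
def blockRep {F : Type*} [Field F] {G : Type*} [Group G] {n₁ n₂ : ℕ}
    (ρ₁ : G →* Matrix.GeneralLinearGroup (Fin n₁) F)
    (ρ₂ : G →* Matrix.GeneralLinearGroup (Fin n₂) F)
    (f : G → Matrix (Fin n₁) (Fin n₂) F) (g : G) :
    Matrix (Fin n₁ ⊕ Fin n₂) (Fin n₁ ⊕ Fin n₂) F :=
  Matrix.fromBlocks (ρ₁ g : Matrix (Fin n₁) (Fin n₁) F) (f g) 0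
    (ρ₂ g : Matrix (Fin n₂) (Fin n₂) F)

/-- scalar centralizer of a non-split extension:
if `ρ₁, ρ₂` are absolutely irreducible and mutually non-isomorphic and `ρ_f` is a
group homomorphism which is non-semisimple (i.e. `f` is not a coboundary), then any
invertible matrix commuting with all `ρ_f(g)` is scalar. -/
theorem blockRep_scalar_centralizer
    {F : Type*} [Field F] {G : Type*} [Group G] {n₁ n₂ : ℕ}
    (hn₁ : 0 < n₁) (hn₂ : 0 < n₂)
    (ρ₁ : G →* Matrix.GeneralLinearGroup (Fin n₁) F)
    (ρ₂ : G →* Matrix.GeneralLinearGroup (Fin n₂) F)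
    -- (i) absolute irreducibility: the centralizers of `ρ₁` and `ρ₂` are scalar
    (habs₁ : ∀ M : Matrix (Fin n₁) (Fin n₁) F,
      (∀ g : G, M * (ρ₁ g : Matrix (Fin n₁) (Fin n₁) F) = (ρ₁ g : Matrix (Fin n₁) (Fin n₁) F) * M) →
      ∃ a : F, M = a • (1 : Matrix (Fin n₁) (Fin n₁) F))
    (habs₂ : ∀ M : Matrix (Fin n₂) (Fin n₂) F,
      (∀ g : G, M * (ρ₂ g : Matrix (Fin n₂) (Fin n₂) F) = (ρ₂ g : Matrix (Fin n₂) (Fin n₂) F) * M) →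
      ∃ a : F, M = a • (1 : Matrix (Fin n₂) (Fin n₂) F))
    -- (ii) non-isomorphy: no nonzero intertwiner `C : ρ₁ → ρ₂`
    (hC : ∀ C : Matrix (Fin n₂) (Fin n₁) F,
      (∀ g : G, C * (ρ₁ g : Matrix (Fin n₁) (Fin n₁) F) = (ρ₂ g : Matrix (Fin n₂) (Fin n₂) F) * C) →
      C = 0)
    -- (iii) non-isomorphy: no nonzero intertwiner `B : ρ₂ → ρ₁`
    (hB : ∀ B : Matrix (Fin n₁) (Fin n₂) F,
      (∀ g : G, (ρ₁ g : Matrix (Fin n₁) (Fin n₁) F) * B = B * (ρ₂ g : Matrix (Fin n₂) (Fin n₂) F)) →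
      B = 0)
    (f : G → Matrix (Fin n₁) (Fin n₂) F)
    -- `ρ_f` is a group homomorphism
    (hmul : ∀ g h : G, blockRep ρ₁ ρ₂ f (g * h) = blockRep ρ₁ ρ₂ f g * blockRep ρ₁ ρ₂ f h)
    (hone : blockRep ρ₁ ρ₂ f 1 = 1)
    -- `ρ_f` is non-semisimple: `f` is not a coboundary
    (hns : ¬ ∃ B : Matrix (Fin n₁) (Fin n₂) F, ∀ g : G,
      f g = (ρ₁ g : Matrix (Fin n₁) (Fin n₁) F) * B - B * (ρ₂ g : Matrix (Fin n₂) (Fin n₂) F)) :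
    ∀ M : Matrix (Fin n₁ ⊕ Fin n₂) (Fin n₁ ⊕ Fin n₂) F, IsUnit M →
      (∀ g : G, M * blockRep ρ₁ ρ₂ f g = blockRep ρ₁ ρ₂ f g * M) →
      ∃ a : F, M = a • (1 : Matrix (Fin n₁ ⊕ Fin n₂) (Fin n₁ ⊕ Fin n₂) F) := by

  intro M _ hcomm
  set A := M.toBlocks₁₁ with hA
  set B := M.toBlocks₁₂ with hBdef
  set C := M.toBlocks₂₁ with hCdef
  set D := M.toBlocks₂₂ with hDdef
  have hM : M = Matrix.fromBlocks A B C D := (Matrix.fromBlocks_toBlocks M).symm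
  -- block equations
  have key : ∀ g : G,
      A * (ρ₁ g : Matrix (Fin n₁) (Fin n₁) F) = (ρ₁ g : Matrix (Fin n₁) (Fin n₁) F) * A + f g * C ∧
      A * f g + B * (ρ₂ g : Matrix (Fin n₂) (Fin n₂) F) = (ρ₁ g : Matrix (Fin n₁) (Fin n₁) F) * B + f g * D ∧
      C * (ρ₁ g : Matrix (Fin n₁) (Fin n₁) F) = (ρ₂ g : Matrix (Fin n₂) (Fin n₂) F) * C ∧
      C * f g + D * (ρ₂ g : Matrix (Fin n₂) (Fin n₂) F) = (ρ₂ g : Matrix (Fin n₂) (Fin n₂) F) * D := by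
    intro g
    have h := hcomm g
    rw [hM, blockRep, Matrix.fromBlocks_multiply, Matrix.fromBlocks_multiply] at h
    refine ⟨?_, ?_, ?_, ?_⟩
    · have := congrArg Matrix.toBlocks₁₁ h
      simpa using this
    · have := congrArg Matrix.toBlocks₁₂ h
      simpa using this
    · have := congrArg Matrix.toBlocks₂₁ h
      simpa using this
    · have := congrArg Matrix.toBlocks₂₂ h
      simpa using this
  have hC0 : C = 0 := hC C fun g => (key g).2.2.1
  obtain ⟨a, ha⟩ := habs₁ A (fun g => by
    have := (key g).1
    simpa [hC0] using this)
  obtain ⟨d, hd⟩ := habs₂ D (fun g => by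
    have := (key g).2.2.2
    simpa [hC0] using this)
  have h12 : ∀ g : G, a • f g + B * (ρ₂ g : Matrix (Fin n₂) (Fin n₂) F)
      = (ρ₁ g : Matrix (Fin n₁) (Fin n₁) F) * B + d • f g := by
    intro g
    have := (key g).2.1
    rw [ha, hd] at this
    simpa [Matrix.smul_mul, Matrix.mul_smul] using this
  have had : a = d := by
    by_contra hne
    apply hns
    refine ⟨(a - d)⁻¹ • B, fun g => ?_⟩
    have h := h12 g
    have h2 : (a - d) • f g = (ρ₁ g : Matrix (Fin n₁) (Fin n₁) F) * B
        - B * (ρ₂ g : Matrix (Fin n₂) (Fin n₂) F) := by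
      rw [sub_smul, sub_eq_sub_iff_add_eq_add]
      exact h
    have hsub : a - d ≠ 0 := sub_ne_zero.mpr hne
    calc f g = (a - d)⁻¹ • ((a - d) • f g) := by
          rw [smul_smul, inv_mul_cancel₀ hsub, one_smul]
      _ = (ρ₁ g : Matrix (Fin n₁) (Fin n₁) F) * ((a - d)⁻¹ • B)
          - ((a - d)⁻¹ • B) * (ρ₂ g : Matrix (Fin n₂) (Fin n₂) F) := by
          rw [h2, smul_sub, Matrix.mul_smul, Matrix.smul_mul]
  have hB0 : B = 0 := hB B (fun g => by
    have h := h12 g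
    rw [had, add_comm ((ρ₁ g : Matrix (Fin n₁) (Fin n₁) F) * B)] at h
    exact (add_left_cancel h).symm)
  refine ⟨a, ?_⟩
  rw [hM, hC0, hB0, ha, had, hd, ← had]
  ext (i | i) (j | j) <;> simp [Matrix.fromBlocks, Matrix.one_apply]
end

section
/- Let f, g: G → M_{n₁×n₂}(F) be functions such that both ρ_f and ρ_g are group homomorphisms G → GL_n(F), and suppose ρ_f and ρ_g are isomorphic, i.e., there exists Y ∈ GL_n(F) with Y·ρ_f(h) = ρ_g(h)·Y for all h ∈ G. Then there exist nonzero scalars a, d ∈ F and a matrix B ∈ M_{n₁×n₂}(F) such that g(h) = d⁻¹·(a·f(h) + B·ρ₂(h) − ρ₁(h)·B) for all h ∈ G; in other words, g is an F×-multiple of f up to a coboundary. -/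
/-- if `ρ_{f₁}` and `ρ_{f₂}` are isomorphic group homomorphisms, with
`ρ₁, ρ₂` absolutely irreducible and mutually non-isomorphic, then `f₂` is an
`F^×`-multiple of `f₁` up to a coboundary:
`f₂(h) = d⁻¹ (a·f₁(h) + B·ρ₂(h) − ρ₁(h)·B)` for some nonzero `a, d ∈ F` and some `B`. -/
theorem blockRep_iso_of_same_extension
    {F : Type*} [Field F] {G : Type*} [Group G] {n₁ n₂ : ℕ}
    (hn₁ : 0 < n₁) (hn₂ : 0 < n₂)
    (ρ₁ : G →* Matrix.GeneralLinearGroup (Fin n₁) F)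
    (ρ₂ : G →* Matrix.GeneralLinearGroup (Fin n₂) F)
    -- (i) absolute irreducibility: the centralizers of `ρ₁` and `ρ₂` are scalar
    (habs₁ : ∀ M : Matrix (Fin n₁) (Fin n₁) F,
      (∀ g : G, M * (ρ₁ g : Matrix (Fin n₁) (Fin n₁) F) = (ρ₁ g : Matrix (Fin n₁) (Fin n₁) F) * M) →
      ∃ a : F, M = a • (1 : Matrix (Fin n₁) (Fin n₁) F))
    (habs₂ : ∀ M : Matrix (Fin n₂) (Fin n₂) F,
      (∀ g : G, M * (ρ₂ g : Matrix (Fin n₂) (Fin n₂) F) = (ρ₂ g : Matrix (Fin n₂) (Fin n₂) F) * M) →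
      ∃ a : F, M = a • (1 : Matrix (Fin n₂) (Fin n₂) F))
    -- (ii) non-isomorphy: no nonzero intertwiner `C : ρ₁ → ρ₂`
    (hC : ∀ C : Matrix (Fin n₂) (Fin n₁) F,
      (∀ g : G, C * (ρ₁ g : Matrix (Fin n₁) (Fin n₁) F) = (ρ₂ g : Matrix (Fin n₂) (Fin n₂) F) * C) →
      C = 0)
    -- (iii) non-isomorphy: no nonzero intertwiner `B : ρ₂ → ρ₁`
    (hB : ∀ B : Matrix (Fin n₁) (Fin n₂) F,
      (∀ g : G, (ρ₁ g : Matrix (Fin n₁) (Fin n₁) F) * B = B * (ρ₂ g : Matrix (Fin n₂) (Fin n₂) F)) →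
      B = 0)
    (f₁ f₂ : G → Matrix (Fin n₁) (Fin n₂) F)
    -- `ρ_{f₁}` and `ρ_{f₂}` are group homomorphisms
    (hmul₁ : ∀ g h : G, blockRep ρ₁ ρ₂ f₁ (g * h) = blockRep ρ₁ ρ₂ f₁ g * blockRep ρ₁ ρ₂ f₁ h)
    (hone₁ : blockRep ρ₁ ρ₂ f₁ 1 = 1)
    (hmul₂ : ∀ g h : G, blockRep ρ₁ ρ₂ f₂ (g * h) = blockRep ρ₁ ρ₂ f₂ g * blockRep ρ₁ ρ₂ f₂ h)
    (hone₂ : blockRep ρ₁ ρ₂ f₂ 1 = 1)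
    -- `ρ_{f₁} ≅ ρ_{f₂}` via an invertible matrix `Y`
    (Y : Matrix (Fin n₁ ⊕ Fin n₂) (Fin n₁ ⊕ Fin n₂) F) (hY : IsUnit Y)
    (hiso : ∀ h : G, Y * blockRep ρ₁ ρ₂ f₁ h = blockRep ρ₁ ρ₂ f₂ h * Y) :
    ∃ a d : F, a ≠ 0 ∧ d ≠ 0 ∧ ∃ B : Matrix (Fin n₁) (Fin n₂) F, ∀ h : G,
      f₂ h = d⁻¹ • (a • f₁ h + B * (ρ₂ h : Matrix (Fin n₂) (Fin n₂) F)
        - (ρ₁ h : Matrix (Fin n₁) (Fin n₁) F) * B) := by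
  set A := Y.toBlocks₁₁ with hA
  set B := Y.toBlocks₁₂ with hBdef
  set C := Y.toBlocks₂₁ with hCdef
  set D := Y.toBlocks₂₂ with hD
  have hYb : Y = Matrix.fromBlocks A B C D := (Matrix.fromBlocks_toBlocks Y).symm
  have key : ∀ h : G,
      Matrix.fromBlocks (A * (ρ₁ h : Matrix (Fin n₁) (Fin n₁) F))
        (A * f₁ h + B * (ρ₂ h : Matrix (Fin n₂) (Fin n₂) F))
        (C * (ρ₁ h : Matrix (Fin n₁) (Fin n₁) F))
        (C * f₁ h + D * (ρ₂ h : Matrix (Fin n₂) (Fin n₂) F))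
      = Matrix.fromBlocks ((ρ₁ h : Matrix (Fin n₁) (Fin n₁) F) * A + f₂ h * C)
        ((ρ₁ h : Matrix (Fin n₁) (Fin n₁) F) * B + f₂ h * D)
        ((ρ₂ h : Matrix (Fin n₂) (Fin n₂) F) * C)
        ((ρ₂ h : Matrix (Fin n₂) (Fin n₂) F) * D) := by
    intro h
    have := hiso h
    rw [hYb] at this
    simpa [blockRep, Matrix.fromBlocks_multiply] using this
  have hC0 : C = 0 := by
    apply hC
    intro g
    have := congrArg Matrix.toBlocks₂₁ (key g)
    simpa [Matrix.toBlocks_fromBlocks₂₁] using this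
  have hAc : ∀ g : G, A * (ρ₁ g : Matrix (Fin n₁) (Fin n₁) F)
      = (ρ₁ g : Matrix (Fin n₁) (Fin n₁) F) * A := by
    intro g
    have := congrArg Matrix.toBlocks₁₁ (key g)
    simpa [Matrix.toBlocks_fromBlocks₁₁, hC0] using this
  have hDc : ∀ g : G, D * (ρ₂ g : Matrix (Fin n₂) (Fin n₂) F)
      = (ρ₂ g : Matrix (Fin n₂) (Fin n₂) F) * D := by
    intro g
    have := congrArg Matrix.toBlocks₂₂ (key g)
    simpa [Matrix.toBlocks_fromBlocks₂₂, hC0] using this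
  obtain ⟨a, ha⟩ := habs₁ A hAc
  obtain ⟨d, hd⟩ := habs₂ D hDc
  have hdet : Y.det ≠ 0 := by
    intro h0
    exact (Matrix.isUnit_iff_isUnit_det Y).mp hY |>.ne_zero h0
  have hdetY : Y.det = a ^ n₁ * d ^ n₂ := by
    rw [hYb, hC0, Matrix.det_fromBlocks_zero₂₁, ha, hd]
    simp [Matrix.det_smul]
  have ha0 : a ≠ 0 := by
    intro h0
    apply hdet
    rw [hdetY, h0, zero_pow hn₁.ne', zero_mul]
  have hd0 : d ≠ 0 := by
    intro h0
    apply hdet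
    rw [hdetY, h0, zero_pow hn₂.ne', mul_zero]
  refine ⟨a, d, ha0, hd0, B, fun h => ?_⟩
  have h12 : A * f₁ h + B * (ρ₂ h : Matrix (Fin n₂) (Fin n₂) F)
      = (ρ₁ h : Matrix (Fin n₁) (Fin n₁) F) * B + f₂ h * D := by
    have := congrArg Matrix.toBlocks₁₂ (key h)
    simpa [Matrix.toBlocks_fromBlocks₁₂] using this
  rw [ha, hd] at h12
  have h12' : d • f₂ h = a • f₁ h + B * (ρ₂ h : Matrix (Fin n₂) (Fin n₂) F)
      - (ρ₁ h : Matrix (Fin n₁) (Fin n₁) F) * B := by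
    have : a • f₁ h + B * (ρ₂ h : Matrix (Fin n₂) (Fin n₂) F)
        = (ρ₁ h : Matrix (Fin n₁) (Fin n₁) F) * B + d • f₂ h := by
      simpa [Matrix.smul_mul, Matrix.mul_smul, smul_smul] using h12
    rw [this]
    abel
  rw [← h12', smul_smul, inv_mul_cancel₀ hd0, one_smul]
end

section
/- Let A be a reduced local commutative ring which is infinite (as a set), and let p be a minimal prime ideal of A. Then the quotient ring A/p is infinite. -/
/-- Lemma `inf` of Berger–Klosin: if `A` is a reduced local commutative
ring which is infinite, and `p` is a minimal prime of `A`, then `A/p` is infinite. -/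
theorem quotient_minimalPrime_infinite
    {A : Type*} [CommRing A] [IsLocalRing A] [IsReduced A] [Infinite A]
    (p : Ideal A) (hp : p ∈ minimalPrimes A) :
    Infinite (A ⧸ p) := by
  haveI hprime : p.IsPrime := hp.1.1
  by_contra h
  rw [not_infinite_iff_finite] at h
  have hfield : IsField (A ⧸ p) := Finite.isField_of_domain _
  have hmax : p.IsMaximal := Ideal.Quotient.maximal_of_isField p hfield
  have hpm : p = IsLocalRing.maximalIdeal A := IsLocalRing.eq_maximalIdeal hmax
  have hbot : p = ⊥ := by
    have h1 : p ≤ nilradical A := by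
      rw [nilradical_eq_sInf]
      apply le_sInf
      intro J hJ
      have hJp : J ≤ p := hpm ▸ IsLocalRing.le_maximalIdeal hJ.ne_top
      exact hp.2 ⟨hJ, bot_le⟩ hJp
    have h2 : nilradical A = 0 := nilradical_eq_zero A
    exact le_bot_iff.mp (by rw [h2] at h1; exact h1)
  have hinj : Function.Injective (Ideal.Quotient.mk p) := by
    rw [RingHom.injective_iff_ker_eq_bot, Ideal.mk_ker]
    exact hbot
  exact absurd (Infinite.of_injective _ hinj) (by rwa [not_infinite_iff_finite])
end

section
/- Let A be a reduced Noetherian local commutative ring which is infinite (as a set), and let I be an ideal of A such that the quotient A/I is finite. Let K denote the total ring of fractions of A, i.e., the localization of A at the multiplicative set of non-zero-divisors of A. Then the extension of I to K is the unit ideal, i.e., the ideal of K generated by the image of I under the canonical map A → K equals K; equivalently, (A/I) ⊗_A K = 0, i.e., the localization of the A-module A/I at the non-zero-divisors of A is the zero module. -/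
/-!
A non-zero-divisor of `A` lying in `I` becomes a unit in `K`, so it suffices to find one.
If there were none, then by prime avoidance `I` would lie in an associated prime `P` of `A`.
As `A ⧸ P` is a quotient of the finite ring `A ⧸ I`, it is a finite domain, so `P` is the
maximal ideal `𝔪`. But if `𝔪 = ann x` with `x ≠ 0` and `A` is reduced, then `x ∉ 𝔪` since
`x ^ 2 ≠ 0`, so `x` is a unit and `𝔪 = 0`. Hence `I = 0` and `A ≅ A ⧸ I` would be finite.
-/

open IsLocalRing

section

variable {A : Type*} [CommRing A]

theorem Ideal.exists_isAssociatedPrime_le_of_disjoint_nonZeroDivisors [IsNoetherianRing A]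
    {I : Ideal A} (h : Disjoint (I : Set A) (nonZeroDivisors A)) :
    ∃ P : Ideal A, IsAssociatedPrime P A ∧ I ≤ P :=
  (I.subset_union_prime_finite (associatedPrimes.finite A A) (f := id) 0 0
    fun _ hP _ _ ↦ hP.isPrime).1 <|
    biUnion_associatedPrimes_eq_compl_nonZeroDivisors A ▸ h.subset_compl_right

theorem Ideal.IsPrime.isMaximal_of_le_of_finite_quotient {I P : Ideal A} [Finite (A ⧸ I)]
    (hP : P.IsPrime) (hIP : I ≤ P) : P.IsMaximal :=
  have : Finite (A ⧸ P) := .of_surjective _ (Ideal.Quotient.factor_surjective hIP)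
  Ideal.Quotient.maximal_of_isField P (Finite.isField_of_domain (A ⧸ P))

theorem IsLocalRing.maximalIdeal_eq_bot_of_isAssociatedPrime [IsLocalRing A] [IsReduced A]
    [IsNoetherianRing A] (h : IsAssociatedPrime (maximalIdeal A) A) : maximalIdeal A = ⊥ := by
  obtain ⟨-, x, hx⟩ := isAssociatedPrime_iff.mp h
  have hann : ∀ y ∈ maximalIdeal A, y * x = 0 := fun y hy ↦ by
    simpa [hx, Submodule.mem_colon_singleton] using hy
  have hxm : x ∉ maximalIdeal A := fun hxm ↦ by
    have hx0 : x = 0 := IsReduced.eq_zero x ⟨2, by rw [sq]; exact hann x hxm⟩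
    exact Ideal.one_notMem (maximalIdeal A) (by simp [hx, Submodule.mem_colon_singleton, hx0])
  have hxu : IsUnit x := notMem_maximalIdeal.mp hxm
  exact (Submodule.eq_bot_iff _).mpr fun y hy ↦ hxu.mul_left_eq_zero.mp (hann y hy)

theorem Ideal.not_disjoint_nonZeroDivisors_of_finite_quotient [IsLocalRing A] [IsReduced A]
    [IsNoetherianRing A] [Infinite A] (I : Ideal A) [Finite (A ⧸ I)] :
    ¬ Disjoint (I : Set A) (nonZeroDivisors A) := by
  intro hI
  obtain ⟨P, hP, hIP⟩ := exists_isAssociatedPrime_le_of_disjoint_nonZeroDivisors hI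
  have hPm : P = maximalIdeal A :=
    eq_maximalIdeal (hP.isPrime.isMaximal_of_le_of_finite_quotient hIP)
  have hI0 : I = ⊥ :=
    le_bot_iff.mp (maximalIdeal_eq_bot_of_isAssociatedPrime (hPm ▸ hP) ▸ hPm ▸ hIP)
  subst hI0
  exact not_finite_iff_infinite.mpr ‹Infinite A› (.of_equiv _ (RingEquiv.quotientBot A).toEquiv)

end

/-- Lemma `lem4` of Berger–Klosin: let `A` be a reduced Noetherian local
commutative ring which is infinite, and `I` an ideal of `A` with `A/I` finite.  Then the
extension of `I` to the total ring of fractions `K` of `A` (the localization of `A` at its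
non-zero-divisors) is the unit ideal. -/
theorem map_totalFractionRing_eq_top_of_finite_quotient
    {A : Type*} [CommRing A] [IsLocalRing A] [IsReduced A] [IsNoetherianRing A] [Infinite A]
    (I : Ideal A) (hI : Finite (A ⧸ I)) :
    Ideal.map (algebraMap A (Localization (nonZeroDivisors A))) I = ⊤ :=
  IsLocalization.map_eq_top_of_not_subset _ _ fun h ↦
    I.not_disjoint_nonZeroDivisors_of_finite_quotient (Set.subset_compl_iff_disjoint_right.mp h)
end
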